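/- arXiv:1807.00320 — 4 statements merged into one kernel-verified Lean document; each statement's English description precedes it below -/
import Mathlib

section
/- The set of all R0-tensors is an open subset of the space ℝ^{[m,n]} of m-th order n-dimensional real tensors (equipped with the Frobenius norm topology, i.e., the Euclidean topology of ℝ^{n^m}). -/
open Finset MeasureTheory Pointwise

/-- For a tensor `A` of order `k+1` and dimension `n` (entries `A i j` = `a_{i, j 0, …, j (k-1)}`),
`tApply A x` is the vector `A x^{k}` with `i`-th component
`∑_{i_2,…,i_{k+1}} a_{i i_2 ⋯ i_{k+1}} x_{i_2} ⋯ x_{i_{k+1}}`. -/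
noncomputable def tApply {n k : ℕ} (A : Fin n → (Fin k → Fin n) → ℝ) (x : Fin n → ℝ) :
    Fin n → ℝ :=
  fun i => ∑ j : Fin k → Fin n, A i j * ∏ l : Fin k, x (j l)

/-- The solution set of the tensor complementarity problem `TCP(A,a)`. -/
def Sol {n k : ℕ} (A : Fin n → (Fin k → Fin n) → ℝ) (a : Fin n → ℝ) : Set (Fin n → ℝ) :=
  {x | (∀ i, 0 ≤ x i) ∧ (∀ i, 0 ≤ tApply A x i + a i) ∧ ∑ i, x i * (tApply A x i + a i) = 0}

/-- `A` is an R₀-tensor if `Sol(A,0) = {0}`. -/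
def IsR0 {n k : ℕ} (A : Fin n → (Fin k → Fin n) → ℝ) : Prop := Sol A 0 = {0}

/-- Frobenius norm of a tensor. -/
noncomputable def tNorm {n k : ℕ} (A : Fin n → (Fin k → Fin n) → ℝ) : ℝ :=
  Real.sqrt (∑ i, ∑ j, (A i j) ^ 2)

/-- Euclidean norm of a vector in ℝⁿ. -/
noncomputable def eNorm {n : ℕ} (x : Fin n → ℝ) : ℝ := Real.sqrt (∑ i, (x i) ^ 2)

lemma tApply_smul {n k : ℕ} (A : Fin n → (Fin k → Fin n) → ℝ) (c : ℝ) (x : Fin n → ℝ)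
    (i : Fin n) : tApply A (c • x) i = c ^ k * tApply A x i := by
  unfold tApply
  rw [Finset.mul_sum]
  refine Finset.sum_congr rfl fun j _ => ?_
  simp only [Pi.smul_apply, smul_eq_mul, Finset.prod_mul_distrib, Finset.prod_const,
    Finset.card_univ, Fintype.card_fin]
  ring

lemma zero_mem_sol {n k : ℕ} (A : Fin n → (Fin k → Fin n) → ℝ) (hk : k ≠ 0) :
    (0 : Fin n → ℝ) ∈ Sol A 0 := by
  have h0 : ∀ i, tApply A (0 : Fin n → ℝ) i = 0 := by
    intro i
    simp [tApply, Finset.prod_const, zero_pow hk]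
  refine ⟨fun i => le_refl 0, fun i => by simp [h0], by simp [h0]⟩

lemma smul_mem_sol {n k : ℕ} {A : Fin n → (Fin k → Fin n) → ℝ} {x : Fin n → ℝ}
    (hx : x ∈ Sol A 0) {c : ℝ} (hc : 0 ≤ c) : c • x ∈ Sol A 0 := by
  obtain ⟨h1, h2, h3⟩ := hx
  simp only [Sol, Set.mem_setOf_eq, Pi.zero_apply, add_zero] at *
  refine ⟨fun i => mul_nonneg hc (h1 i), fun i => ?_, ?_⟩
  · rw [tApply_smul]; exact mul_nonneg (pow_nonneg hc k) (h2 i)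
  · have : ∀ i ∈ Finset.univ, (c • x) i * tApply A (c • x) i
        = c ^ (k + 1) * (x i * tApply A x i) := by
      intro i _
      rw [tApply_smul]
      simp only [Pi.smul_apply, smul_eq_mul]
      ring
    rw [Finset.sum_congr rfl this, ← Finset.mul_sum, h3, mul_zero]

lemma cont_tApply {n k : ℕ} (i : Fin n) :
    Continuous fun p : (Fin n → (Fin k → Fin n) → ℝ) × (Fin n → ℝ) => tApply p.1 p.2 i := by
  unfold tApply
  refine continuous_finset_sum _ fun j _ => Continuous.mul ?_ ?_
  · exact (continuous_apply j).comp ((continuous_apply i).comp continuous_fst)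
  · exact continuous_finset_prod _ fun l _ => (continuous_apply (j l)).comp continuous_snd

/-- the set of R₀-tensors is open in ℝ^[m,n]. -/
theorem stmt_1 (m n : ℕ) (hm : 2 ≤ m) (hn : 2 ≤ n) :
    IsOpen {A : Fin n → (Fin (m - 1) → Fin n) → ℝ | IsR0 A} := by
  set k := m - 1 with hk
  have hk0 : k ≠ 0 := by omega
  rw [← isClosed_compl_iff]
  -- the sphere
  set Sph : Set (Fin n → ℝ) := {x | ∑ i, (x i) ^ 2 = 1} with hSph
  have hSphClosed : IsClosed Sph := by
    have : Continuous fun x : Fin n → ℝ => ∑ i, (x i) ^ 2 :=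
      continuous_finset_sum _ fun i _ => (continuous_apply i).pow 2
    exact isClosed_eq this continuous_const
  have hSphCompact : IsCompact Sph := by
    refine (isCompact_closedBall (0 : Fin n → ℝ) 1).of_isClosed_subset hSphClosed ?_
    intro x hx
    rw [mem_closedBall_zero_iff]
    rw [pi_norm_le_iff_of_nonneg zero_le_one]
    intro i
    have h1 : (x i) ^ 2 ≤ 1 := by
      rw [← hx]
      exact Finset.single_le_sum (fun j _ => sq_nonneg (x j)) (Finset.mem_univ i)
    rw [Real.norm_eq_abs]
    nlinarith [abs_nonneg (x i), sq_abs (x i)]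
  haveI : CompactSpace Sph := isCompact_iff_compactSpace.mp hSphCompact
  -- the closed condition set
  set C : Set ((Fin n → (Fin k → Fin n) → ℝ) × (Fin n → ℝ)) :=
    {p | (∀ i, 0 ≤ p.2 i) ∧ (∀ i, 0 ≤ tApply p.1 p.2 i) ∧ ∑ i, p.2 i * tApply p.1 p.2 i = 0}
    with hC
  have hCClosed : IsClosed C := by
    have e1 : IsClosed {p : (Fin n → (Fin k → Fin n) → ℝ) × (Fin n → ℝ) | ∀ i, 0 ≤ p.2 i} := by
      rw [Set.setOf_forall]
      exact isClosed_iInter fun i =>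
        isClosed_le continuous_const ((continuous_apply i).comp continuous_snd)
    have e2 : IsClosed {p : (Fin n → (Fin k → Fin n) → ℝ) × (Fin n → ℝ) |
        ∀ i, 0 ≤ tApply p.1 p.2 i} := by
      rw [Set.setOf_forall]
      exact isClosed_iInter fun i => isClosed_le continuous_const (cont_tApply i)
    have e3 : IsClosed {p : (Fin n → (Fin k → Fin n) → ℝ) × (Fin n → ℝ) |
        ∑ i, p.2 i * tApply p.1 p.2 i = 0} := by
      refine isClosed_eq ?_ continuous_const
      exact continuous_finset_sum _ fun i _ =>
        ((continuous_apply i).comp continuous_snd).mul (cont_tApply i)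
    have : C = _ ∩ (_ ∩ _) := rfl
    exact (e1.inter (e2.inter e3))
  -- the closed set in the product with the sphere
  set φ : (Fin n → (Fin k → Fin n) → ℝ) × Sph → (Fin n → (Fin k → Fin n) → ℝ) × (Fin n → ℝ) :=
    fun p => (p.1, p.2.val) with hφ
  have hφc : Continuous φ := continuous_fst.prodMk (continuous_subtype_val.comp continuous_snd)
  have key : {A : Fin n → (Fin k → Fin n) → ℝ | IsR0 A}ᶜ = Prod.fst '' (φ ⁻¹' C) := by
    ext A
    simp only [Set.mem_compl_iff, Set.mem_setOf_eq, Set.mem_image, Set.mem_preimage]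
    constructor
    · intro hA
      have hsub : ¬ Sol A (0 : Fin n → ℝ) ⊆ {0} := fun h => hA
        (subset_antisymm h (by simpa [Set.singleton_subset_iff] using zero_mem_sol A hk0))
      obtain ⟨x, hx, hx0⟩ := Set.not_subset.mp hsub
      have hx0' : x ≠ 0 := by simpa using hx0
      have hs : 0 < ∑ i, (x i) ^ 2 := by
        rcases lt_or_eq_of_le (Finset.sum_nonneg fun i _ => sq_nonneg (x i)) with h | h
        · exact h
        · exfalso
          have := (Finset.sum_eq_zero_iff_of_nonneg fun i _ => sq_nonneg (x i)).mp h.symm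
          exact hx0' (funext fun i =>
            pow_eq_zero_iff (two_ne_zero) |>.mp (this i (Finset.mem_univ i)))
      set c : ℝ := (Real.sqrt (∑ i, (x i) ^ 2))⁻¹ with hc
      have hsq : 0 < Real.sqrt (∑ i, (x i) ^ 2) := Real.sqrt_pos.mpr hs
      have hcpos : 0 < c := inv_pos.mpr hsq
      have hy : c • x ∈ Sol A 0 := smul_mem_sol hx hcpos.le
      refine ⟨(A, ⟨c • x, ?_⟩), ?_, rfl⟩
      · show ∑ i, ((c • x) i) ^ 2 = 1
        have : ∀ i ∈ Finset.univ, ((c • x) i) ^ 2 = c ^ 2 * (x i) ^ 2 := by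
          intro i _; simp [mul_pow]
        rw [Finset.sum_congr rfl this, ← Finset.mul_sum, hc]
        rw [← Real.sqrt_inv, Real.sq_sqrt (by positivity)]
        field_simp
      · obtain ⟨h1, h2, h3⟩ := hy
        simp only [Pi.zero_apply, add_zero] at h2 h3
        exact ⟨h1, h2, h3⟩
    · rintro ⟨⟨B, y, hy⟩, ⟨h1, h2, h3⟩, rfl⟩
      intro hA
      have hy' : y ∈ Sol B 0 := ⟨h1, fun i => by simpa using h2 i, by simpa using h3⟩
      rw [hA] at hy'
      have : y = 0 := hy'
      rw [this] at hy
      simp only [hSph, Set.mem_setOf_eq] at hy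
      simp at hy
  rw [key]
  exact isClosedMap_fst_of_compactSpace _ (hCClosed.preimage hφc)
end

section
/- The set of all R0-tensors is generic in ℝ^{[m,n]}: it is dense in ℝ^{[m,n]} ≅ ℝ^{n^m}, and its complement { A ∈ ℝ^{[m,n]} : A is not an R0-tensor } has Lebesgue measure zero in ℝ^{n^m}. -/
open Finset MeasureTheory Pointwise

namespace R0Aux

variable {n k : ℕ}

/-- The tensor space. -/
abbrev Tsp (n k : ℕ) : Type := Fin n → (Fin k → Fin n) → ℝ

/-- The constant multi-index `(i, i, …, i)`. -/
def ci (k : ℕ) {n : ℕ} (i : Fin n) : Fin k → Fin n := fun _ => i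

lemma prod_ci (x : Fin n → ℝ) (i : Fin n) : (∏ l : Fin k, x (ci k i l)) = x i ^ k := by
  simp [ci, Finset.prod_const]

lemma tApply_smul (A : Tsp n k) (t : ℝ) (x : Fin n → ℝ) (i : Fin n) :
    tApply A (t • x) i = t ^ k * tApply A x i := by
  unfold tApply
  rw [Finset.mul_sum]
  refine Finset.sum_congr rfl fun j _ => ?_
  have h : (∏ l : Fin k, (t • x) (j l)) = t ^ k * ∏ l : Fin k, x (j l) := by
    simp only [Pi.smul_apply, smul_eq_mul]
    rw [Finset.prod_mul_distrib, Finset.prod_const]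
    simp
  rw [h]; ring

variable (S : Finset (Fin n))

/-- The tensor with the "diagonal" entries indexed by `S` zeroed out. -/
noncomputable def Zt (A : Tsp n k) : Tsp n k :=
  fun i j => if i ∈ S ∧ j = ci k i then 0 else A i j

/-- The vector of diagonal entries indexed by `S` (zero off `S`). -/
noncomputable def Yt (A : Tsp n k) : Fin n → ℝ :=
  fun i => if i ∈ S then A i (ci k i) else 0

/-- The key degenerate map: replace each diagonal entry `a_{i⋯i}`, `i ∈ S`, by the value
it is forced to take if the vector of diagonal entries were a solution of the TCP. -/
noncomputable def Psi (A : Tsp n k) : Tsp n k :=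
  fun i j => if i ∈ S ∧ j = ci k i then
    -(tApply (Zt S A) (Yt S A) i / (Yt S A i) ^ k) else A i j

/-- The degenerate direction: the diagonal entries, embedded back into tensor space. -/
noncomputable def vt (A : Tsp n k) : Tsp n k :=
  fun i j => if i ∈ S ∧ j = ci k i then A i j else 0

/-- Tensors with positive diagonal entries on `S`. -/
def Ut : Set (Tsp n k) := {A | ∀ i ∈ S, 0 < A i (ci k i)}

lemma Zt_add_smul_vt (A : Tsp n k) (t : ℝ) : Zt S (A + t • vt S A) = Zt S A := by
  funext i j
  by_cases h : i ∈ S ∧ j = ci k i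
  · simp [Zt, h]
  · simp [Zt, vt, h]

lemma Yt_add_smul_vt (A : Tsp n k) (t : ℝ) :
    Yt S (A + t • vt S A) = (1 + t) • Yt S A := by
  funext i
  by_cases h : i ∈ S
  · have hv : vt S A i (ci k i) = A i (ci k i) := if_pos ⟨h, rfl⟩
    simp only [Yt, vt, Pi.add_apply, Pi.smul_apply, smul_eq_mul, if_pos h] at hv ⊢
    rw [hv]; ring
  · simp [Yt, h]

lemma psi_scale (A : Tsp n k) (t : ℝ) (ht : 1 + t ≠ 0) :
    Psi S (A + t • vt S A) = Psi S A := by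
  funext i j
  unfold Psi
  by_cases h : i ∈ S ∧ j = ci k i
  · rw [if_pos h, if_pos h, Zt_add_smul_vt, Yt_add_smul_vt, tApply_smul]
    have hYi : ((1 + t) • Yt S A) i = (1 + t) * Yt S A i := rfl
    rw [hYi, mul_pow, mul_div_mul_left _ _ (pow_ne_zero k ht)]
  · rw [if_neg h, if_neg h]
    simp [vt, h]

lemma tApply_decomp (A : Tsp n k) (x : Fin n → ℝ) {i : Fin n} (hi : i ∈ S) :
    tApply A x i = tApply (Zt S A) x i + A i (ci k i) * x i ^ k := by
  unfold tApply Zt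
  have key : ∀ j : Fin k → Fin n,
      A i j * ∏ l, x (j l) =
        (if i ∈ S ∧ j = ci k i then 0 else A i j) * ∏ l, x (j l)
          + (if j = ci k i then A i j * ∏ l, x (j l) else 0) := by
    intro j
    by_cases hj : j = ci k i
    · simp [hj, hi]
    · simp [hj]
  have hsum : ∑ j : Fin k → Fin n, A i j * ∏ l, x (j l)
      = ∑ j : Fin k → Fin n, ((if i ∈ S ∧ j = ci k i then 0 else A i j) * ∏ l, x (j l)
          + (if j = ci k i then A i j * ∏ l, x (j l) else 0)) :=
    Finset.sum_congr rfl fun j _ => key j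
  rw [hsum, Finset.sum_add_distrib, Finset.sum_ite_eq' Finset.univ (ci k i)]
  simp [prod_ci]

lemma diff_coord (i : Fin n) (j : Fin k → Fin n) :
    Differentiable ℝ (fun B : Tsp n k => B i j) := by
  have h1 : Differentiable ℝ (fun B : Tsp n k => B i) :=
    (differentiable_pi.mp differentiable_id) i
  have h2 : Differentiable ℝ (fun w : (Fin k → Fin n) → ℝ => w j) :=
    (differentiable_pi.mp differentiable_id) j
  exact h2.comp h1

lemma diff_prod_aux {E : Type*} [NormedAddCommGroup E] [NormedSpace ℝ E]
    {ι : Type*} [DecidableEq ι] (u : Finset ι) (f : ι → E → ℝ)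
    (hf : ∀ i, Differentiable ℝ (f i)) :
    Differentiable ℝ (fun x => ∏ i ∈ u, f i x) := by
  induction u using Finset.induction with
  | empty => simpa using differentiable_const (1 : ℝ)
  | insert _ _ h ih =>
    simp only [Finset.prod_insert h]
    exact (hf _).mul ih

lemma diff_Yt (i : Fin n) : Differentiable ℝ (fun B : Tsp n k => Yt S B i) := by
  unfold Yt
  by_cases h : i ∈ S
  · simp only [if_pos h]; exact diff_coord i (ci k i)
  · simp only [if_neg h]; exact differentiable_const 0

lemma diff_Zt (i : Fin n) (j : Fin k → Fin n) :
    Differentiable ℝ (fun B : Tsp n k => Zt S B i j) := by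
  unfold Zt
  by_cases h : i ∈ S ∧ j = ci k i
  · simp only [if_pos h]; exact differentiable_const 0
  · simp only [if_neg h]; exact diff_coord i j

lemma diff_tApply (i : Fin n) :
    Differentiable ℝ (fun B : Tsp n k => tApply (Zt S B) (Yt S B) i) := by
  unfold tApply
  apply Differentiable.fun_sum
  intro j _
  exact (diff_Zt S i j).mul (diff_prod_aux Finset.univ _ (fun l => diff_Yt S (j l)))

lemma diff_at {A : Tsp n k} (hA : A ∈ Ut S) : DifferentiableAt ℝ (Psi S) A := by
  rw [differentiableAt_pi]
  intro i
  rw [differentiableAt_pi]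
  intro j
  simp only [Psi]
  by_cases h : i ∈ S ∧ j = ci k i
  · simp only [if_pos h, div_eq_mul_inv]
    have hYA : Yt S A i = A i (ci k i) := by simp [Yt, h.1]
    have hne : (Yt S A i) ^ k ≠ 0 := by
      rw [hYA]; exact pow_ne_zero _ (ne_of_gt (hA i h.1))
    have hnum : DifferentiableAt ℝ (fun B : Tsp n k => tApply (Zt S B) (Yt S B) i) A :=
      (diff_tApply S i) A
    have hden : DifferentiableAt ℝ (fun B : Tsp n k => Yt S B i ^ k) A :=
      ((diff_Yt S i).pow k) A
    exact (hnum.mul (hden.inv hne)).neg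
  · simp only [if_neg h]
    exact diff_coord i j A

lemma fderiv_vt_eq_zero {A : Tsp n k} (hA : A ∈ Ut S) :
    fderiv ℝ (Psi S) A (vt S A) = 0 := by
  have hF : HasFDerivAt (Psi S) (fderiv ℝ (Psi S) A) A := (diff_at S hA).hasFDerivAt
  have hc : HasDerivAt (fun t : ℝ => A + t • vt S A) (vt S A) 0 := by
    have h1 : HasDerivAt (fun t : ℝ => t • vt S A) ((1 : ℝ) • vt S A) 0 :=
      (hasDerivAt_id (0 : ℝ)).smul_const _
    simpa using h1.const_add A
  have hF' : HasFDerivAt (Psi S) (fderiv ℝ (Psi S) A) ((fun t : ℝ => A + t • vt S A) 0) := by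
    simpa using hF
  have hcomp : HasDerivAt (fun t : ℝ => Psi S (A + t • vt S A))
      (fderiv ℝ (Psi S) A (vt S A)) 0 := HasFDerivAt.comp_hasDerivAt (f := fun t : ℝ => A + t • vt S A) 0 hF' hc
  have hev : (fun t : ℝ => Psi S (A + t • vt S A)) =ᶠ[nhds (0 : ℝ)] fun _ => Psi S A := by
    filter_upwards [eventually_ne_nhds (show (0 : ℝ) ≠ -1 by norm_num)] with t ht
    exact psi_scale S A t (fun hc0 => ht (by linarith))
  have hconst : HasDerivAt (fun t : ℝ => Psi S (A + t • vt S A)) 0 0 :=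
    (hasDerivAt_const 0 (Psi S A)).congr_of_eventuallyEq hev
  exact hcomp.unique hconst

lemma det_zero (hS : S.Nonempty) {A : Tsp n k} (hA : A ∈ Ut S) :
    (fderiv ℝ (Psi S) A).det = 0 := by
  by_contra hd
  have hv0 : fderiv ℝ (Psi S) A (vt S A) = 0 := fderiv_vt_eq_zero S hA
  set f := ((fderiv ℝ (Psi S) A : Tsp n k →L[ℝ] Tsp n k) : Tsp n k →ₗ[ℝ] Tsp n k) with hf
  have hd' : LinearMap.det f ≠ 0 := hd
  have hcoe : ((LinearMap.equivOfDetNeZero f hd') : Tsp n k →ₗ[ℝ] Tsp n k) = f :=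
    LinearEquiv.coe_ofIsUnitDet _
  have hinj : Function.Injective f := by
    intro a b hab
    apply (LinearMap.equivOfDetNeZero f hd').injective
    show ((LinearMap.equivOfDetNeZero f hd' : Tsp n k →ₗ[ℝ] Tsp n k)) a
        = ((LinearMap.equivOfDetNeZero f hd' : Tsp n k →ₗ[ℝ] Tsp n k)) b
    rw [hcoe]; exact hab
  obtain ⟨i0, hi0⟩ := hS
  have hvne : vt S A ≠ 0 := by
    intro h0
    have h1 : vt S A i0 (ci k i0) = 0 := by rw [h0]; rfl
    have h2 : vt S A i0 (ci k i0) = A i0 (ci k i0) := if_pos ⟨hi0, rfl⟩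
    have := hA i0 hi0
    rw [h2] at h1
    linarith
  apply hvne
  apply hinj
  rw [map_zero]
  exact hv0

lemma image_null (hS : S.Nonempty) :
    volume (Psi (n := n) (k := k) S '' Ut (n := n) (k := k) S) = 0 :=
  addHaar_image_eq_zero_of_det_fderivWithin_eq_zero volume
    (fun A hA => ((diff_at S hA).hasFDerivAt).hasFDerivWithinAt)
    (fun A hA => det_zero S hS hA)

lemma mem_image (hk : k ≠ 0) {A : Tsp n k} (h : ¬ IsR0 A) :
    ∃ S : Finset (Fin n), S.Nonempty ∧ A ∈ Psi S '' Ut S := by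
  classical
  have hzero : ∀ i, tApply A (0 : Fin n → ℝ) i = 0 := by
    intro i; unfold tApply
    refine Finset.sum_eq_zero fun j _ => ?_
    have hp : (∏ l : Fin k, (0 : Fin n → ℝ) (j l)) = 0 := by
      simp [Finset.prod_const, zero_pow hk]
    rw [hp, mul_zero]
  have h0 : (0 : Fin n → ℝ) ∈ Sol A 0 := by
    refine ⟨fun i => le_refl 0, fun i => ?_, ?_⟩
    · simp [hzero i]
    · simp
  obtain ⟨x, hxSol, hxne⟩ : ∃ x, x ∈ Sol A 0 ∧ x ≠ 0 := by
    by_contra hcon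
    push_neg at hcon
    exact h (Set.eq_singleton_iff_unique_mem.mpr ⟨h0, fun y hy => hcon y hy⟩)
  obtain ⟨h1, h2, h3⟩ := hxSol
  have h2' : ∀ i, 0 ≤ tApply A x i := by intro i; simpa using h2 i
  have h3' : ∑ i, x i * tApply A x i = 0 := by simpa using h3
  have hcomp : ∀ i, x i ≠ 0 → tApply A x i = 0 := by
    intro i hxi
    have hterm : x i * tApply A x i = 0 :=
      (Finset.sum_eq_zero_iff_of_nonneg
        (fun i _ => mul_nonneg (h1 i) (h2' i))).mp h3' i (Finset.mem_univ i)
    exact (mul_eq_zero.mp hterm).resolve_left hxi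
  set S : Finset (Fin n) := Finset.univ.filter (fun i => x i ≠ 0) with hSdef
  have hmem : ∀ i, i ∈ S ↔ x i ≠ 0 := by intro i; simp [hSdef]
  have hS : S.Nonempty := by
    obtain ⟨i, hi⟩ := Function.ne_iff.mp hxne
    exact ⟨i, (hmem i).mpr (by simpa using hi)⟩
  have hxpos : ∀ i ∈ S, 0 < x i := fun i hi => lt_of_le_of_ne (h1 i) (Ne.symm ((hmem i).mp hi))
  refine ⟨S, hS, ?_⟩
  set A' : Tsp n k := (fun i j => if i ∈ S ∧ j = ci k i then x i else A i j) with hA'def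
  refine ⟨A', fun i hi => ?_, ?_⟩
  · show 0 < A' i (ci k i)
    have hA'i : A' i (ci k i) = x i := if_pos ⟨hi, rfl⟩
    rw [hA'i]; exact hxpos i hi
  · -- Psi S A' = A
    have hZ : Zt S A' = Zt S A := by
      funext i j; unfold Zt
      by_cases hij : i ∈ S ∧ j = ci k i
      · rw [if_pos hij, if_pos hij]
      · rw [if_neg hij, if_neg hij]
        exact if_neg hij
    have hY : Yt S A' = x := by
      funext i; unfold Yt
      by_cases hi : i ∈ S
      · rw [if_pos hi]
        exact if_pos ⟨hi, rfl⟩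
      · rw [if_neg hi]
        have hxz : ¬ x i ≠ 0 := fun hc => hi ((hmem i).mpr hc)
        exact (not_not.mp hxz).symm
    funext i j
    unfold Psi
    by_cases hij : i ∈ S ∧ j = ci k i
    · rw [if_pos hij, hZ, hY]
      obtain ⟨hi, rfl⟩ := hij
      have hxk : x i ^ k ≠ 0 := pow_ne_zero _ (ne_of_gt (hxpos i hi))
      have hdec := tApply_decomp S A x hi
      have h0i : tApply A x i = 0 := hcomp i ((hmem i).mp hi)
      rw [h0i] at hdec
      field_simp
      linarith
    · rw [if_neg hij]
      exact if_neg hij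

end R0Aux

/-- the set of R₀-tensors is dense and its complement has Lebesgue measure zero. -/
theorem stmt_5 (m n : ℕ) (hm : 2 ≤ m) (hn : 2 ≤ n) :
    Dense {A : Fin n → (Fin (m - 1) → Fin n) → ℝ | IsR0 A} ∧
      MeasureTheory.volume {A : Fin n → (Fin (m - 1) → Fin n) → ℝ | ¬ IsR0 A} = 0 := by
  classical
  have hk : (m - 1) ≠ 0 := by omega
  have hnull : MeasureTheory.volume
      {A : Fin n → (Fin (m - 1) → Fin n) → ℝ | ¬ IsR0 A} = 0 := by
    have hsub : {A : R0Aux.Tsp n (m - 1) | ¬ IsR0 A} ⊆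
        ⋃ (S : Finset (Fin n)), ⋃ (_ : S.Nonempty), R0Aux.Psi S '' R0Aux.Ut S := by
      intro A hA
      obtain ⟨S, hS, hmem⟩ := R0Aux.mem_image hk hA
      exact Set.mem_iUnion.mpr ⟨S, Set.mem_iUnion.mpr ⟨hS, hmem⟩⟩
    refine measure_mono_null hsub ?_
    exact measure_iUnion_null fun S => measure_iUnion_null fun hS => R0Aux.image_null S hS
  refine ⟨?_, hnull⟩
  rw [dense_iff_inter_open]
  intro U hU hUne
  by_contra hcon
  rw [Set.not_nonempty_iff_eq_empty] at hcon
  have hsub : U ⊆ {A : Fin n → (Fin (m - 1) → Fin n) → ℝ | ¬ IsR0 A} := by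
    intro A hA hR0
    exact Set.eq_empty_iff_forall_notMem.mp hcon A ⟨hA, hR0⟩
  have hU0 : MeasureTheory.volume U = 0 := measure_mono_null hsub hnull
  have hpos := hU.measure_pos MeasureTheory.volume hUne
  exact hpos.ne' hU0
end

section
/- There exists a set S ⊆ ℝ^{[m,n]} × ℝ^n that is dense and whose complement has Lebesgue measure zero, such that for every (A,a) ∈ S the solution set Sol(A,a) is a finite set. -/
open Finset MeasureTheory Pointwise

/-! ### Auxiliary definitions -/

section Defs
variable (n k : ℕ)

def myMask (I : Finset (Fin n)) (u : Fin n → ℝ) : Fin n → ℝ := fun i => if i ∈ I then u i else 0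

def myPatch (I : Finset (Fin n)) (x a : Fin n → ℝ) : Fin n → ℝ :=
  fun i => if i ∈ I then x i else a i

noncomputable def myG (I : Finset (Fin n)) :
    ((Fin n → (Fin k → Fin n) → ℝ) × (Fin n → ℝ)) →
      ((Fin n → (Fin k → Fin n) → ℝ) × (Fin n → ℝ)) :=
  fun p => (p.1, fun i => if i ∈ I then -(tApply p.1 (myMask n I p.2) i) else p.2 i)

noncomputable def myY (I : Finset (Fin n)) (t : Fin n) (B : Fin n → (Fin k → Fin n) → ℝ) :
    Fin n → ℝ :=
  fun s => if s = t then 1 else if s ∈ I then B s (fun _ => t) else 0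

noncomputable def myF (I : Finset (Fin n)) (t : Fin n) (B : Fin n → (Fin k → Fin n) → ℝ) :
    Fin n → (Fin k → Fin n) → ℝ :=
  fun i j => if i ∈ I ∧ j = (fun _ => t) then
    -(∑ j' ∈ Finset.univ.erase (fun _ => t), B i j' * ∏ l : Fin k, myY n k I t B (j' l))
  else B i j

noncomputable def myPi (t : Fin n) :
    (Fin n → (Fin k → Fin n) → ℝ) →ₗ[ℝ] (Fin n → (Fin k → Fin n) → ℝ) where
  toFun := fun B i j => if i = t ∧ j = (fun _ => t) then 0 else B i j
  map_add' := by intro B C; funext i j; by_cases h : i = t ∧ j = (fun _ => t) <;> simp [h]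
  map_smul' := by intro c B; funext i j; by_cases h : i = t ∧ j = (fun _ => t) <;> simp [h]

end Defs

section Lem
variable {n k : ℕ}

/-- det of a non-injective endomorphism vanishes. -/
lemma myDetZero {V : Type*} [AddCommGroup V] [Module ℝ V] [FiniteDimensional ℝ V]
    (T : V →ₗ[ℝ] V) (v : V) (hv : v ≠ 0) (hTv : T v = 0) : LinearMap.det T = 0 := by
  by_contra h
  let e := LinearMap.equivOfDetNeZero T h
  have : e v = e 0 := by
    have h1 : e v = T v := rfl
    simp [h1, hTv]
  exact hv (e.injective this)

/-- A C¹ map with invertible differential is injective near a point. -/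
lemma myLocInj {V : Type*} [NormedAddCommGroup V] [NormedSpace ℝ V] [FiniteDimensional ℝ V]
    {g : V → V} (hg : ContDiff ℝ 1 g) {q : V} (hdet : (fderiv ℝ g q).det ≠ 0) :
    ∃ s ∈ nhds q, Set.InjOn g s := by
  have hbij : Function.Bijective (fderiv ℝ g q) := by
    have h1 : Function.Injective ((fderiv ℝ g q) : V →ₗ[ℝ] V) := by
      intro v w hvw
      by_contra hne
      have : ((fderiv ℝ g q) : V →ₗ[ℝ] V) (v - w) = 0 := by
        simp [map_sub, hvw]
      exact hdet (myDetZero _ (v - w) (sub_ne_zero.2 hne) this)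
    exact ⟨h1, (LinearMap.injective_iff_surjective).1 h1⟩
  let eL : V ≃ₗ[ℝ] V := LinearEquiv.ofBijective ((fderiv ℝ g q) : V →ₗ[ℝ] V) hbij
  let eC : V ≃L[ℝ] V := eL.toContinuousLinearEquiv
  have hco : (eC : V →L[ℝ] V) = fderiv ℝ g q := by
    ext v; rfl
  have hstrict : HasStrictFDerivAt g (eC : V →L[ℝ] V) q := by
    rw [hco]
    exact (hg.contDiffAt).hasStrictFDerivAt one_ne_zero
  refine ⟨(HasStrictFDerivAt.toOpenPartialHomeomorph (hf := hstrict) g).source,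
    (HasStrictFDerivAt.toOpenPartialHomeomorph (hf := hstrict) g).open_source.mem_nhds
      (HasStrictFDerivAt.mem_toOpenPartialHomeomorph_source (hf := hstrict)),
    ?_⟩
  intro x hx y hy hxy
  exact (HasStrictFDerivAt.toOpenPartialHomeomorph (hf := hstrict) g).injOn hx hy (by simpa using hxy)

/-- tApply is C¹ jointly. -/
lemma myContDiff_tApply (i : Fin n) :
    ContDiff ℝ 1 (fun p : ((Fin n → (Fin k → Fin n) → ℝ) × (Fin n → ℝ)) => tApply p.1 p.2 i) := by
  unfold tApply
  apply ContDiff.sum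
  intro j _
  apply ContDiff.mul
  · exact contDiff_pi.mp ((contDiff_pi.mp contDiff_fst) i) j
  · apply contDiff_prod
    intro l _
    exact (contDiff_pi.mp contDiff_snd) (j l)

/-- homogeneity -/
lemma myHomog (A : Fin n → (Fin k → Fin n) → ℝ) (c : ℝ) (x : Fin n → ℝ) (i : Fin n) :
    tApply A (c • x) i = c ^ k * tApply A x i := by
  unfold tApply
  rw [Finset.mul_sum]
  apply Finset.sum_congr rfl
  intro j _
  have : ∏ l : Fin k, (c • x) (j l) = c ^ k * ∏ l : Fin k, x (j l) := by
    simp only [Pi.smul_apply, smul_eq_mul]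
    rw [Finset.prod_mul_distrib, Finset.prod_const, Finset.card_univ, Fintype.card_fin]
  rw [this]; ring

lemma myCont_tApply (A : Fin n → (Fin k → Fin n) → ℝ) (i : Fin n) :
    Continuous (fun x : Fin n → ℝ => tApply A x i) :=
  (myContDiff_tApply (n := n) (k := k) i).continuous.comp (Continuous.prodMk_right A)

lemma myContDiff_G (I : Finset (Fin n)) : ContDiff ℝ 1 (myG n k I) := by
  apply ContDiff.prodMk contDiff_fst
  apply contDiff_pi.mpr
  intro i
  by_cases hi : i ∈ I
  · simp only [myG, hi, if_true]
    apply ContDiff.neg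
    have hL : ContDiff ℝ 1 (fun p : ((Fin n → (Fin k → Fin n) → ℝ) × (Fin n → ℝ)) =>
        ((p.1, myMask n I p.2) : (Fin n → (Fin k → Fin n) → ℝ) × (Fin n → ℝ))) := by
      apply ContDiff.prodMk contDiff_fst
      apply contDiff_pi.mpr
      intro s
      by_cases hs : s ∈ I
      · simp only [myMask, hs, if_true]
        exact (contDiff_pi.mp contDiff_snd) s
      · simp only [myMask, hs, if_false]
        exact contDiff_const
    exact (myContDiff_tApply i).comp hL
  · simp only [myG, hi, if_false]
    exact (contDiff_pi.mp contDiff_snd) i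

lemma myContDiff_F (I : Finset (Fin n)) (t : Fin n) : ContDiff ℝ 1 (myF n k I t) := by
  apply contDiff_pi.mpr; intro i
  apply contDiff_pi.mpr; intro j
  by_cases hij : i ∈ I ∧ j = (fun _ => t)
  · simp only [myF, hij, if_true]
    apply ContDiff.neg
    apply ContDiff.sum
    intro j' _
    apply ContDiff.mul
    · exact contDiff_pi.mp (contDiff_pi.mp contDiff_id i) j'
    · apply contDiff_prod
      intro l _
      unfold myY
      by_cases h1 : (j' l) = t
      · simp only [h1, if_true]; exact contDiff_const
      · simp only [h1, if_false]
        by_cases h2 : (j' l) ∈ I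
        · simp only [h2, if_true]
          exact contDiff_pi.mp (contDiff_pi.mp contDiff_id (j' l)) (fun _ => t)
        · simp only [h2, if_false]; exact contDiff_const
  · simp only [myF, hij, if_false]
    exact contDiff_pi.mp (contDiff_pi.mp contDiff_id i) j

lemma myY_pi (I : Finset (Fin n)) (t : Fin n) (B : Fin n → (Fin k → Fin n) → ℝ) :
    myY n k I t (myPi n k t B) = myY n k I t B := by
  funext s
  unfold myY myPi
  by_cases hs : s = t
  · simp [hs]
  · simp only [hs, if_false]
    by_cases hsI : s ∈ I
    · simp [hsI, hs]
    · simp [hsI]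

lemma myF_pi (I : Finset (Fin n)) (t : Fin n) (ht : t ∈ I) (B : Fin n → (Fin k → Fin n) → ℝ) :
    myF n k I t (myPi n k t B) = myF n k I t B := by
  funext i j
  unfold myF
  by_cases hij : i ∈ I ∧ j = (fun _ => t)
  · simp only [hij, if_true]
    rw [myY_pi]
    refine congrArg Neg.neg (Finset.sum_congr rfl ?_)
    intro j' hj'
    have hj'ne : j' ≠ (fun _ => t) := (Finset.mem_erase.mp hj').1
    have : myPi n k t B i j' = B i j' := by
      unfold myPi
      simp [hj'ne]
    rw [this]
  · simp only [hij, if_false]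
    have : ¬(i = t ∧ j = (fun _ => t)) := by
      rintro ⟨h1, h2⟩
      exact hij ⟨h1 ▸ ht, h2⟩
    unfold myPi
    simp [this]

lemma myDet_pi (t : Fin n) : LinearMap.det (myPi n k t) = 0 := by
  classical
  apply myDetZero (myPi n k t) (Pi.single t (Pi.single (fun _ => t) (1:ℝ)))
  · intro h
    have := congrFun (congrFun h t) (fun _ => t)
    simp [Pi.single_eq_same] at this
  · funext i j
    unfold myPi
    simp only [LinearMap.coe_mk, AddHom.coe_mk]
    by_cases hij : i = t ∧ j = (fun _ => t)
    · simp [hij]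
    · simp only [hij, if_false]
      rcases Decidable.em (i = t) with h1 | h1
      · have h2 : j ≠ (fun _ => t) := fun hj => hij ⟨h1, hj⟩
        rw [h1]
        simp [Pi.single_eq_same, Pi.single_eq_of_ne h2]
      · simp [Pi.single_eq_of_ne h1]

/-- The derivative of `myF` is everywhere singular. -/
lemma myF_det_zero (I : Finset (Fin n)) (t : Fin n) (ht : t ∈ I)
    (B : Fin n → (Fin k → Fin n) → ℝ) :
    (fderiv ℝ (myF n k I t) B).det = 0 := by
  classical
  let πL : (Fin n → (Fin k → Fin n) → ℝ) →L[ℝ] (Fin n → (Fin k → Fin n) → ℝ) :=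
    LinearMap.toContinuousLinearMap (myPi n k t)
  have hdiff : Differentiable ℝ (myF n k I t) := (myContDiff_F I t).differentiable one_ne_zero
  have hcomp : myF n k I t = (myF n k I t) ∘ πL := by
    funext B'
    exact (myF_pi I t ht B').symm
  have hder : fderiv ℝ (myF n k I t) B = (fderiv ℝ (myF n k I t) (πL B)).comp πL := by
    conv_lhs => rw [hcomp]
    rw [fderiv_comp B (hdiff _) (πL.differentiableAt)]
    rw [πL.fderiv]
  have hdet : ((fderiv ℝ (myF n k I t) (πL B)).comp πL).det
      = (fderiv ℝ (myF n k I t) (πL B)).det * LinearMap.det (myPi n k t) := by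
    rw [ContinuousLinearMap.det, ContinuousLinearMap.toLinearMap_comp, LinearMap.det_comp]
    rfl
  rw [hder, hdet, myDet_pi, mul_zero]

end Lem

section Lem2
variable {n k : ℕ}

lemma myG_eval (I : Finset (Fin n)) (A : Fin n → (Fin k → Fin n) → ℝ) (a x : Fin n → ℝ)
    (hx0 : ∀ i ∉ I, x i = 0) (heq : ∀ i ∈ I, tApply A x i + a i = 0) :
    myG n k I (A, myPatch n I x a) = (A, a) := by
  unfold myG
  refine Prod.ext rfl ?_
  have hmask : myMask n I (myPatch n I x a) = x := by
    funext s
    unfold myMask myPatch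
    by_cases hs : s ∈ I
    · simp [hs]
    · simp [hs, hx0 s hs]
  funext i
  simp only [hmask]
  by_cases hi : i ∈ I
  · simp only [hi, if_true]
    have := heq i hi
    linarith
  · simp only [hi, if_false]
    unfold myPatch
    simp [hi]

lemma myF_range (I : Finset (Fin n)) (t : Fin n) (A : Fin n → (Fin k → Fin n) → ℝ)
    (w : Fin n → ℝ) (hwt : w t = 1) (hw0 : ∀ s ∉ I, w s = 0)
    (hweq : ∀ i ∈ I, tApply A w i = 0) :
    A ∈ Set.range (myF n k I t) := by
  classical
  refine ⟨fun i j => if i ∈ I ∧ j = (fun _ => t) then (if i = t then 0 else w i) else A i j, ?_⟩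
  set B : Fin n → (Fin k → Fin n) → ℝ :=
    fun i j => if i ∈ I ∧ j = (fun _ => t) then (if i = t then 0 else w i) else A i j with hB
  have hY : myY n k I t B = w := by
    funext s
    unfold myY
    by_cases hs : s = t
    · rw [hs, hwt]; simp
    · simp only [hs, if_false]
      by_cases hsI : s ∈ I
      · simp [hB, hsI, hs]
      · simp [hsI, hw0 s hsI]
  funext i j
  unfold myF
  rw [hY]
  by_cases hij : i ∈ I ∧ j = (fun _ => t)
  · rw [if_pos hij]
    have hBij : ∀ j' ∈ Finset.univ.erase (fun _ : Fin k => t), B i j' = A i j' := by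
      intro j' hj'
      have hj'ne : j' ≠ (fun _ => t) := (Finset.mem_erase.mp hj').1
      simp [hB, hj'ne]
    have hsum : ∑ j' ∈ Finset.univ.erase (fun _ : Fin k => t), B i j' * ∏ l : Fin k, w (j' l)
        = ∑ j' ∈ Finset.univ.erase (fun _ : Fin k => t), A i j' * ∏ l : Fin k, w (j' l) := by
      refine Finset.sum_congr rfl fun j' hj' => by rw [hBij j' hj']
    have htot : A i (fun _ => t) * ∏ l : Fin k, w ((fun _ : Fin k => t) l)
        + ∑ j' ∈ Finset.univ.erase (fun _ : Fin k => t), A i j' * ∏ l : Fin k, w (j' l)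
        = tApply A w i := by
      unfold tApply
      exact Finset.add_sum_erase Finset.univ
        (fun j' => A i j' * ∏ l : Fin k, w (j' l)) (Finset.mem_univ _)
    have hprod : ∏ l : Fin k, w ((fun _ : Fin k => t) l) = 1 := by
      simp [hwt]
    rw [hsum]
    rw [hweq i hij.1, hprod, mul_one] at htot
    rw [hij.2]
    linarith
  · simp only [hij, if_false]
    simp [hB, hij]

end Lem2

section Meas
variable {n k : ℕ}

instance myHaarProd (n k : ℕ) :
    Measure.IsAddHaarMeasure
      (volume : Measure ((Fin n → (Fin k → Fin n) → ℝ) × (Fin n → ℝ))) :=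
  have : Measure.IsAddHaarMeasure (volume : Measure (Fin n → (Fin k → Fin n) → ℝ)) :=
    Measure.pi.isAddHaarMeasure _
  Measure.prod.instIsAddHaarMeasure _ _

lemma myF_null (I : Finset (Fin n)) (t : Fin n) (ht : t ∈ I) :
    volume (Set.range (myF n k I t)) = 0 := by
  rw [← Set.image_univ]
  exact addHaar_image_eq_zero_of_det_fderivWithin_eq_zero volume
    (fun B _ => ((myContDiff_F I t).differentiable one_ne_zero B).hasFDerivAt.hasFDerivWithinAt)
    (fun B _ => myF_det_zero I t ht B)

lemma myG_null (I : Finset (Fin n)) :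
    volume (myG n k I '' {q | (fderiv ℝ (myG n k I) q).det = 0}) = 0 :=
  addHaar_image_eq_zero_of_det_fderivWithin_eq_zero volume
    (fun q _ => ((myContDiff_G I).differentiable one_ne_zero q).hasFDerivAt.hasFDerivWithinAt)
    (fun _ hq => hq)

lemma myProd_null (I : Finset (Fin n)) (t : Fin n) (ht : t ∈ I) :
    volume ((Set.range (myF n k I t)) ×ˢ (Set.univ : Set (Fin n → ℝ))) = 0 := by
  rw [Measure.volume_eq_prod, Measure.prod_prod, myF_null I t ht, zero_mul]

end Meas

section Main
variable {n k : ℕ}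

lemma myMain (hk0 : k ≠ 0) (A : Fin n → (Fin k → Fin n) → ℝ) (a : Fin n → ℝ)
    (hinf : (Sol A a).Infinite) :
    (A, a) ∈ (⋃ I : Finset (Fin n), myG n k I '' {q | (fderiv ℝ (myG n k I) q).det = 0}) ∪
      (⋃ I : Finset (Fin n), ⋃ t : Fin n, ⋃ _ : t ∈ I,
        (Set.range (myF n k I t)) ×ˢ (Set.univ : Set (Fin n → ℝ))) := by
  classical
  set T : Finset (Fin n) → Set (Fin n → ℝ) := fun I =>
    {x | (∀ i ∉ I, x i = 0) ∧ (∀ i ∈ I, tApply A x i + a i = 0)} with hT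
  have hsub : Sol A a ⊆ ⋃ I : Finset (Fin n), T I := by
    intro x hx
    obtain ⟨hx1, hx2, hx3⟩ := hx
    have hterm : ∀ i, x i * (tApply A x i + a i) = 0 := by
      have hnn : ∀ i ∈ Finset.univ, (0:ℝ) ≤ x i * (tApply A x i + a i) :=
        fun i _ => mul_nonneg (hx1 i) (hx2 i)
      have h := (Finset.sum_eq_zero_iff_of_nonneg hnn).mp hx3
      exact fun i => h i (Finset.mem_univ i)
    refine Set.mem_iUnion.mpr ⟨Finset.univ.filter (fun i => x i ≠ 0), ?_, ?_⟩
    · intro i hi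
      by_contra hne
      exact hi (Finset.mem_filter.mpr ⟨Finset.mem_univ i, hne⟩)
    · intro i hi
      have hne : x i ≠ 0 := (Finset.mem_filter.mp hi).2
      rcases mul_eq_zero.mp (hterm i) with h | h
      · exact absurd h hne
      · exact h
  have hexI : ∃ I : Finset (Fin n), (Sol A a ∩ T I).Infinite := by
    by_contra hc
    push_neg at hc
    have heq : Sol A a = ⋃ I : Finset (Fin n), Sol A a ∩ T I := by
      ext x
      constructor
      · intro hx
        obtain ⟨I, hI⟩ := Set.mem_iUnion.mp (hsub hx)
        exact Set.mem_iUnion.mpr ⟨I, hx, hI⟩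
      · rintro hx
        obtain ⟨I, hI⟩ := Set.mem_iUnion.mp hx
        exact hI.1
    have : (Sol A a).Finite := by
      rw [heq]
      exact Set.finite_iUnion fun I => hc I
    exact hinf this
  obtain ⟨I, hI⟩ := hexI
  by_cases hb : Bornology.IsBounded (Sol A a ∩ T I)
  · -- bounded case : accumulation point
    let emb : ℕ ↪ ↥(Sol A a ∩ T I) := Set.Infinite.natEmbedding _ hI
    let u : ℕ → (Fin n → ℝ) := fun j => (emb j : Fin n → ℝ)
    have humem : ∀ j, u j ∈ Sol A a ∩ T I := fun j => (emb j).2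
    have huinj : Function.Injective u := fun j1 j2 h =>
      emb.injective (Subtype.ext h)
    obtain ⟨xstar, hxcl, φ, hφ, htend⟩ := tendsto_subseq_of_bounded hb humem
    set v : ℕ → (Fin n → ℝ) := fun j => u (φ j) with hv
    have hvtend : Filter.Tendsto v Filter.atTop (nhds xstar) := htend
    have hvT : ∀ j, v j ∈ T I := fun j => (humem (φ j)).2
    have hvinj : Function.Injective v := huinj.comp hφ.injective
    have hxT : xstar ∈ T I := by
      constructor
      · intro i hi
        have h1 : Filter.Tendsto (fun j => v j i) Filter.atTop (nhds (xstar i)) :=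
          (tendsto_pi_nhds.mp hvtend) i
        have h2 : (fun j => v j i) = fun _ => (0:ℝ) := funext fun j => (hvT j).1 i hi
        rw [h2] at h1
        exact tendsto_nhds_unique h1 tendsto_const_nhds
      · intro i hi
        have h1 : Filter.Tendsto (fun j => tApply A (v j) i) Filter.atTop
            (nhds (tApply A xstar i)) := ((myCont_tApply A i).tendsto xstar).comp hvtend
        have h2 : (fun j => tApply A (v j) i) = fun _ => -a i := funext fun j => by
          have := (hvT j).2 i hi; linarith
        rw [h2] at h1
        have h3 := tendsto_nhds_unique h1 tendsto_const_nhds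
        linarith
    set q : ℕ → ((Fin n → (Fin k → Fin n) → ℝ) × (Fin n → ℝ)) :=
      fun j => (A, myPatch n I (v j) a) with hq
    set qstar : ((Fin n → (Fin k → Fin n) → ℝ) × (Fin n → ℝ)) :=
      (A, myPatch n I xstar a) with hqstar
    have hqtend : Filter.Tendsto q Filter.atTop (nhds qstar) := by
      apply Filter.Tendsto.prodMk_nhds tendsto_const_nhds
      apply tendsto_pi_nhds.mpr
      intro i
      unfold myPatch
      by_cases hi : i ∈ I
      · simp only [hi, if_true]
        exact (tendsto_pi_nhds.mp hvtend) i
      · simp only [hi, if_false]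
        exact tendsto_const_nhds
    have hGq : ∀ j, myG n k I (q j) = (A, a) := fun j =>
      myG_eval I A a (v j) (hvT j).1 (hvT j).2
    have hdet : (fderiv ℝ (myG n k I) qstar).det = 0 := by
      by_contra hne
      obtain ⟨s, hs, hinj⟩ := myLocInj (myContDiff_G I) hne
      have hev : ∀ᶠ j in Filter.atTop, q j ∈ s := hqtend.eventually_mem hs
      obtain ⟨J, hJ⟩ := Filter.eventually_atTop.mp hev
      have hne' : q J ≠ q (J+1) := by
        intro h
        have h2 := congrArg Prod.snd h
        have hv' : v J = v (J+1) := by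
          funext i
          by_cases hi : i ∈ I
          · have h3 := congrFun h2 i
            simpa [hq, myPatch, hi] using h3
          · rw [(hvT J).1 i hi, (hvT (J+1)).1 i hi]
        have := hvinj hv'
        omega
      exact hne' (hinj (hJ J le_rfl) (hJ (J+1) (by omega))
        (by rw [hGq J, hGq (J+1)]))
    left
    refine Set.mem_iUnion.mpr ⟨I, ⟨qstar, hdet, ?_⟩⟩
    exact myG_eval I A a xstar hxT.1 hxT.2
  · -- unbounded case
    have hex : ∀ j : ℕ, ∃ x ∈ Sol A a ∩ T I, (j : ℝ) < ‖x‖ := by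
      intro j
      by_contra hcon
      push_neg at hcon
      exact hb (isBounded_iff_forall_norm_le.mpr ⟨j, hcon⟩)
    choose x hxmem hxnorm using hex
    have hxpos : ∀ j, 0 < ‖x j‖ := fun j => lt_of_le_of_lt (Nat.cast_nonneg j) (hxnorm j)
    set y : ℕ → (Fin n → ℝ) := fun j => (‖x j‖)⁻¹ • x j with hy
    have hy1 : ∀ j, ‖y j‖ = 1 := fun j => by
      rw [hy]
      simp only [norm_smul, norm_inv, norm_norm]
      exact inv_mul_cancel₀ (hxpos j).ne'
    have hysph : ∀ j, y j ∈ Metric.sphere (0 : Fin n → ℝ) 1 := fun j => by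
      simpa [mem_sphere_zero_iff_norm] using hy1 j
    obtain ⟨ystar, hycl, φ, hφ, hytend⟩ :=
      tendsto_subseq_of_bounded Metric.isBounded_sphere hysph
    have hsph : ystar ∈ Metric.sphere (0 : Fin n → ℝ) 1 := by
      rwa [Metric.isClosed_sphere.closure_eq] at hycl
    have hynorm : ‖ystar‖ = 1 := mem_sphere_zero_iff_norm.mp hsph
    have hninv : Filter.Tendsto (fun j => (‖x (φ j)‖)⁻¹) Filter.atTop (nhds 0) := by
      have h1 : Filter.Tendsto (fun j => ‖x (φ j)‖) Filter.atTop Filter.atTop := by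
        apply Filter.tendsto_atTop_mono (fun j => ?_) tendsto_natCast_atTop_atTop
        calc (j:ℝ) ≤ (φ j : ℝ) := by exact_mod_cast Nat.cast_le.mpr (hφ.le_apply)
        _ ≤ ‖x (φ j)‖ := (hxnorm (φ j)).le
      exact h1.inv_tendsto_atTop
    have hy0 : ∀ i ∉ I, ystar i = 0 := by
      intro i hi
      have h1 : Filter.Tendsto (fun j => y (φ j) i) Filter.atTop (nhds (ystar i)) :=
        (tendsto_pi_nhds.mp hytend) i
      have h2 : (fun j => y (φ j) i) = fun _ => (0:ℝ) := funext fun j => by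
        have := (hxmem (φ j)).2.1 i hi
        simp [hy, this]
      rw [h2] at h1
      exact tendsto_nhds_unique h1 tendsto_const_nhds
    have hyeq : ∀ i ∈ I, tApply A ystar i = 0 := by
      intro i hi
      have h1 : Filter.Tendsto (fun j => tApply A (y (φ j)) i) Filter.atTop
          (nhds (tApply A ystar i)) := ((myCont_tApply A i).tendsto ystar).comp hytend
      have h2 : (fun j => tApply A (y (φ j)) i)
          = fun j => ((‖x (φ j)‖)⁻¹)^k * (- a i) := by
        funext j
        rw [hy]
        rw [myHomog]
        have h3 := (hxmem (φ j)).2.2 i hi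
        have h4 : tApply A (x (φ j)) i = - a i := by linarith
        rw [h4]
      rw [h2] at h1
      have h3 : Filter.Tendsto (fun j => ((‖x (φ j)‖)⁻¹)^k * (- a i)) Filter.atTop
          (nhds ((0:ℝ)^k * (- a i))) := (hninv.pow k).mul_const _
      rw [zero_pow hk0, zero_mul] at h3
      exact tendsto_nhds_unique h1 h3
    have hyne : ystar ≠ 0 := by
      intro h
      rw [h] at hynorm
      simp at hynorm
    obtain ⟨t, ht0⟩ := Function.ne_iff.mp hyne
    have ht0' : ystar t ≠ 0 := by simpa using ht0
    have htI : t ∈ I := by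
      by_contra h
      exact ht0' (hy0 t h)
    set w : Fin n → ℝ := (ystar t)⁻¹ • ystar with hw
    have hwt : w t = 1 := by
      rw [hw]
      simp only [Pi.smul_apply, smul_eq_mul]
      field_simp
    have hw0 : ∀ s ∉ I, w s = 0 := fun s hs => by
      rw [hw]
      simp [hy0 s hs]
    have hweq : ∀ i ∈ I, tApply A w i = 0 := fun i hi => by
      rw [hw, myHomog, hyeq i hi, mul_zero]
    right
    refine Set.mem_iUnion.mpr ⟨I, Set.mem_iUnion.mpr ⟨t, Set.mem_iUnion.mpr ⟨htI, ?_⟩⟩⟩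
    exact ⟨myF_range I t A w hwt hw0 hweq, Set.mem_univ _⟩

end Main

/-- there is a dense, full-measure set `S` of parameters `(A,a)` on which the
solution map is finite-valued. -/
theorem stmt_7 (m n : ℕ) (hm : 2 ≤ m) (hn : 2 ≤ n) :
    ∃ S : Set ((Fin n → (Fin (m - 1) → Fin n) → ℝ) × (Fin n → ℝ)),
      Dense S ∧ MeasureTheory.volume Sᶜ = 0 ∧ ∀ p ∈ S, (Sol p.1 p.2).Finite := by
  classical
  have hk0 : m - 1 ≠ 0 := by omega
  set N : Set ((Fin n → (Fin (m - 1) → Fin n) → ℝ) × (Fin n → ℝ)) :=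
    (⋃ I : Finset (Fin n), myG n (m-1) I '' {q | (fderiv ℝ (myG n (m-1) I) q).det = 0}) ∪
      (⋃ I : Finset (Fin n), ⋃ t : Fin n, ⋃ _ : t ∈ I,
        (Set.range (myF n (m-1) I t)) ×ˢ (Set.univ : Set (Fin n → ℝ))) with hN
  have hNnull : volume N = 0 := by
    rw [hN]
    apply measure_union_null
    · exact measure_iUnion_null fun I => myG_null I
    · exact measure_iUnion_null fun I => measure_iUnion_null fun t =>
        measure_iUnion_null fun ht => myProd_null I t ht
  refine ⟨Nᶜ, ?_, ?_, ?_⟩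
  · rw [dense_iff_inter_open]
    intro U hU hUne
    by_contra h
    have hsub : U ⊆ N := by
      intro z hz
      by_contra hzN
      exact h ⟨z, hz, hzN⟩
    have hpos := hU.measure_pos volume hUne
    have h0 : volume U = 0 := measure_mono_null hsub hNnull
    rw [h0] at hpos
    exact lt_irrefl _ hpos
  · rw [compl_compl]
    exact hNnull
  · intro p hp
    by_contra hfin
    exact hp (myMain hk0 p.1 p.2 hfin)
end

section
/- Let A be an m-th order n-dimensional real tensor and a ∈ ℝ^n be such that Sol(A,a) is nonempty and bounded. If the solution map Sol is upper semicontinuous at (A,a) — i.e., for every open set V ⊇ Sol(A,a) there is an open neighborhood U of (A,a) in ℝ^{[m,n]} × ℝ^n with Sol(B,b) ⊆ V for all (B,b) ∈ U — then A is an R0-tensor. -/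
open Finset MeasureTheory Pointwise

/-- if `Sol(A,a)` is nonempty and bounded, and the solution map is upper
semicontinuous at `(A,a)`, then `A` is R₀. -/
theorem stmt_12 (m n : ℕ) (hm : 2 ≤ m) (hn : 2 ≤ n) (A : Fin n → (Fin (m - 1) → Fin n) → ℝ) (a : Fin n → ℝ)
    (hne : (Sol A a).Nonempty) (hbd : Bornology.IsBounded (Sol A a))
    (husc : ∀ V' : Set (Fin n → ℝ), IsOpen V' → Sol A a ⊆ V' →
      ∃ U : Set ((Fin n → (Fin (m - 1) → Fin n) → ℝ) × (Fin n → ℝ)), IsOpen U ∧ (A, a) ∈ U ∧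
        ∀ p ∈ U, Sol p.1 p.2 ⊆ V') :
    IsR0 A := by
  have hk1 : 1 ≤ m - 1 := by omega
  have hk0 : m - 1 ≠ 0 := by omega
  have hz : tApply A 0 = 0 := by
    funext i
    simp only [tApply, Pi.zero_apply]
    simp [Finset.prod_const, zero_pow hk0]
  ext x
  simp only [Set.mem_singleton_iff]
  constructor
  · intro hx
    by_contra hxne
    obtain ⟨hx1, hx2, hx3⟩ := hx
    obtain ⟨p, hp⟩ : ∃ p, 0 < x p := by
      by_contra h
      push_neg at h
      exact hxne (funext fun i => le_antisymm (h i) (hx1 i))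
    obtain ⟨R, hR⟩ := hbd.subset_ball (0 : Fin n → ℝ)
    obtain ⟨U, hUo, hUm, hUsub⟩ := husc (Metric.ball 0 R) Metric.isOpen_ball hR
    obtain ⟨ε, hε, hball⟩ := Metric.isOpen_iff.1 hUo _ hUm
    set M : ℝ := 1 + ∑ i, |a i| with hMdef
    have haM : ∀ i, |a i| < M := by
      intro i
      have h1 : |a i| ≤ ∑ i, |a i| :=
        Finset.single_le_sum (fun i _ => abs_nonneg (a i)) (Finset.mem_univ i)
      linarith
    set s : ℝ := x p with hsdef
    set T : ℝ := max (M / ε) (max (R + 1) 1) with hTdef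
    have hT1 : 1 ≤ T := le_trans (le_max_right _ _) (le_max_right _ _)
    have hTR : R + 1 ≤ T := le_trans (le_max_left _ _) (le_max_right _ _)
    have hTM : M / ε ≤ T := le_max_left _ _
    have hT0 : 0 < T := lt_of_lt_of_le one_pos hT1
    set t : ℝ := T / s with htdef
    have ht0 : 0 < t := div_pos hT0 hp
    have hts : t * s = T := div_mul_cancel₀ T (ne_of_gt hp)
    set c : ℝ := T ^ (m - 1) with hcdef
    have hc0 : 0 < c := pow_pos hT0 _
    have hcM : M / ε ≤ c := le_trans hTM (le_self_pow₀ hT1 hk0)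
    have hMcε : M ≤ c * ε := by
      rw [div_le_iff₀ hε] at hcM
      exact hcM
    set j0 : Fin (m - 1) → Fin n := fun _ => p with hj0
    set B : Fin n → (Fin (m - 1) → Fin n) → ℝ :=
      fun i j => A i j + (if j = j0 then -a i / c else 0) with hBdef
    have prod_smul : ∀ (j : Fin (m - 1) → Fin n),
        (∏ l, (t • x) (j l)) = t ^ (m - 1) * ∏ l, x (j l) := by
      intro j
      simp only [Pi.smul_apply, smul_eq_mul]
      rw [Finset.prod_mul_distrib, Finset.prod_const]
      simp
    have prod_j0 : (∏ l, (t • x) (j0 l)) = c := by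
      rw [prod_smul j0]
      simp only [hj0]
      rw [Finset.prod_const]
      simp only [Finset.card_univ, Fintype.card_fin, hcdef, ← hsdef]
      rw [← mul_pow, hts]
    have key : ∀ i, tApply B (t • x) i = t ^ (m - 1) * tApply A x i - a i := by
      intro i
      simp only [tApply, hBdef, add_mul, Finset.sum_add_distrib]
      have h1 : ∑ j : Fin (m - 1) → Fin n, A i j * ∏ l, (t • x) (j l)
          = t ^ (m - 1) * ∑ j : Fin (m - 1) → Fin n, A i j * ∏ l, x (j l) := by
        rw [Finset.mul_sum]
        refine Finset.sum_congr rfl fun j _ => ?_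
        rw [prod_smul j]; ring
      have hite : ∀ j : Fin (m - 1) → Fin n,
          (if j = j0 then -a i / c else 0) * ∏ l, (t • x) (j l)
          = if j = j0 then -a i / c * ∏ l, (t • x) (j l) else 0 := by
        intro j; split <;> simp
      have h2 : ∑ j : Fin (m - 1) → Fin n,
          (if j = j0 then -a i / c else 0) * ∏ l, (t • x) (j l) = -a i := by
        rw [Finset.sum_congr rfl fun j _ => hite j,
          Finset.sum_ite_eq' Finset.univ j0 (fun j => -a i / c * ∏ l, (t • x) (j l)),
          if_pos (Finset.mem_univ j0), prod_j0]
        exact div_mul_cancel₀ _ (ne_of_gt hc0)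
      rw [h1, h2]; ring
    have hxA : ∀ i, 0 ≤ tApply A x i := by
      intro i; have := hx2 i; simpa using this
    have hxsum : ∑ i, x i * tApply A x i = 0 := by
      have := hx3; simpa using this
    have hmem : t • x ∈ Sol B a := by
      refine ⟨fun i => mul_nonneg (le_of_lt ht0) (hx1 i), fun i => ?_, ?_⟩
      · rw [key i]
        have h : t ^ (m - 1) * tApply A x i - a i + a i = t ^ (m - 1) * tApply A x i := by ring
        rw [h]
        exact mul_nonneg (pow_nonneg (le_of_lt ht0) _) (hxA i)
      · have h : ∀ i, (t • x) i * (tApply B (t • x) i + a i)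
            = t ^ (m - 1 + 1) * (x i * tApply A x i) := by
          intro i
          rw [key i]
          simp only [Pi.smul_apply, smul_eq_mul]
          ring
        rw [Finset.sum_congr rfl fun i _ => h i, ← Finset.mul_sum, hxsum, mul_zero]
    have hBU : ((B, a) : (Fin n → (Fin (m - 1) → Fin n) → ℝ) × (Fin n → ℝ)) ∈ U := by
      apply hball
      rw [Metric.mem_ball, Prod.dist_eq]
      apply max_lt _ (by simpa using hε)
      rw [dist_pi_lt_iff hε]
      intro i
      rw [dist_pi_lt_iff hε]
      intro j
      rw [Real.dist_eq, hBdef]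
      have h : A i j + (if j = j0 then -a i / c else 0) - A i j
          = (if j = j0 then -a i / c else 0) := by ring
      simp only []
      rw [h]
      split
      · rw [abs_div, abs_of_pos hc0, abs_neg, div_lt_iff₀ hc0]
        have := haM i
        nlinarith
      · simpa using hε
    have hin : t • x ∈ Metric.ball (0 : Fin n → ℝ) R := hUsub (B, a) hBU hmem
    rw [Metric.mem_ball] at hin
    have hdp : dist ((t • x) p) ((0 : Fin n → ℝ) p) ≤ dist (t • x) (0 : Fin n → ℝ) :=
      dist_le_pi_dist _ _ p
    have hT : dist ((t • x) p) ((0 : Fin n → ℝ) p) = T := by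
      simp only [Pi.smul_apply, smul_eq_mul, Pi.zero_apply, Real.dist_eq, sub_zero]
      rw [abs_of_pos (mul_pos ht0 hp)]
      exact hts
    linarith
  · rintro rfl
    exact ⟨fun i => le_refl 0, fun i => by simp [hz], by simp [hz]⟩
end
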